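/- For every n ≥ 3 there exist two vertices x, y of Q_n of opposite parities and a set P of 2n − 3 edges of Q_n whose induced subgraph is a linear forest, with no path of P joining x and y and neither x nor y incident with more than one edge of P, such that no Hamiltonian path of Q_n from x to y contains all edges of P. -/

import Mathlib

/-! Take `x = 0`, `y = 𝐞 c` and `u = 𝐞 a`. Every edge of `P` joins a vertex `d ∈ base a c` to the
neighbour `up d` of larger Hamming weight, and `up` is injective on `base a c`. Such an edge set is
a linear forest: each vertex has at most one neighbour below it and at most one above it, and a
vertex of maximal weight on a cycle would have two neighbours below it.

`base a c` consists of `0` and of `𝐞 i`, `𝐞 a + 𝐞 i` for `i ∉ {a, c}`, so every neighbour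
`𝐞 a + 𝐞 i` of `u` except `𝐞 a + 𝐞 c` already carries two edges of `P`, and the only edge at `x`
of a path starting at `x` goes to `𝐞 b`. A Hamiltonian path from `x` to `y` through `P` could
therefore enter and leave the interior vertex `u` only via `𝐞 a + 𝐞 c`. -/

open SimpleGraph Finset

/-- The n-dimensional hypercube: vertices are 0/1 vectors, adjacent iff
Hamming distance is 1. -/
def cube (n : ℕ) : SimpleGraph (Fin n → ZMod 2) where
  Adj x y := hammingDist x y = 1
  symm := by constructor; intro x y h; show hammingDist y x = 1; rw [hammingDist_comm]; exact h
  loopless := by constructor; intro x h; simp [hammingDist_self] at h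

/-- Parity of a vertex: sum of coordinates mod 2. -/
def parity {n : ℕ} (u : Fin n → ZMod 2) : ZMod 2 := ∑ i, u i

namespace SimpleGraph.Walk
variable {V : Type*} {G : SimpleGraph V} {u v : V}

theorem IsPath.ncard_neighborSet_toSubgraph_le_two {p : G.Walk u v} (hp : p.IsPath) (x : V) :
    (p.toSubgraph.neighborSet x).ncard ≤ 2 := by
  rcases (p.toSubgraph.neighborSet x).eq_empty_or_nonempty with hempty | ⟨y, hy⟩
  · simp [hempty]
  have hnil : ¬ p.Nil := fun h => by
    simpa [edges_eq_nil.mpr h] using p.adj_toSubgraph_iff_mem_edges.mp hy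
  obtain ⟨i, rfl, hi⟩ := mem_support_iff_exists_getVert.mp
    ((p.mem_verts_toSubgraph).mp (p.toSubgraph.edge_vert hy))
  rcases Nat.eq_zero_or_pos i with rfl | hi0
  · rw [getVert_zero, hp.neighborSet_toSubgraph_startpoint hnil, Set.ncard_singleton]; omega
  rcases hi.lt_or_eq with hlt | rfl
  · rw [hp.ncard_neighborSet_toSubgraph_internal_eq_two hi0.ne' hlt]
  · rw [getVert_length, hp.neighborSet_toSubgraph_endpoint hnil, Set.ncard_singleton]; omega

theorem IsPath.eq_or_eq_of_toSubgraph_adj {p : G.Walk u v} (hp : p.IsPath) {x a b c : V}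
    (hab : a ≠ b) (ha : p.toSubgraph.Adj x a) (hb : p.toSubgraph.Adj x b)
    (hc : p.toSubgraph.Adj x c) : c = a ∨ c = b := by
  by_contra! h
  have := (Set.two_lt_ncard_iff (p.finite_neighborSet_toSubgraph)).mpr
    ⟨a, b, c, ha, hb, hc, hab, h.1.symm, h.2.symm⟩
  have := hp.ncard_neighborSet_toSubgraph_le_two x
  omega

theorem IsPath.ncard_neighborSet_toSubgraph_eq_two {p : G.Walk u v} (hp : p.IsPath) {x : V}
    (hx : x ∈ p.support) (hxu : x ≠ u) (hxv : x ≠ v) :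
    (p.toSubgraph.neighborSet x).ncard = 2 := by
  obtain ⟨i, rfl, hi⟩ := mem_support_iff_exists_getVert.mp hx
  refine hp.ncard_neighborSet_toSubgraph_internal_eq_two (fun h => hxu ?_)
    (hi.lt_of_ne fun h => hxv ?_)
  · simp [h]
  · simp [h]

end SimpleGraph.Walk

namespace SimpleGraph
variable {V : Type*} {H : SimpleGraph V} {f : V → ℕ}

theorem isAcyclic_of_lowerNeighbors_subsingleton (hadj : ∀ ⦃v w⦄, H.Adj v w → f v ≠ f w)
    (hlow : ∀ v, {w | H.Adj v w ∧ f w < f v}.Subsingleton) : H.IsAcyclic := by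
  classical
  intro v c hc
  obtain ⟨m, hm, hmax⟩ := c.support.toFinset.exists_max_image f ⟨v, by simp⟩
  obtain ⟨a, b, hab, hnbr⟩ := Set.ncard_eq_two.mp
    (hc.ncard_neighborSet_toSubgraph_eq_two (List.mem_toFinset.mp hm))
  have lower : ∀ w ∈ c.toSubgraph.neighborSet m, H.Adj m w ∧ f w < f m := fun w hw => by
    have hmw : H.Adj m w := c.toSubgraph.adj_sub hw
    have hw : w ∈ c.support := c.mem_verts_toSubgraph.mp (c.toSubgraph.edge_vert hw.symm)
    exact ⟨hmw, (hmax w (List.mem_toFinset.mpr hw)).lt_of_ne (hadj hmw).symm⟩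
  exact hab (hlow m (lower a (by simp [hnbr])) (lower b (by simp [hnbr])))

theorem ncard_neighborSet_le_two_of_subsingleton (hadj : ∀ ⦃v w⦄, H.Adj v w → f v ≠ f w)
    (v : V) (hlow : {w | H.Adj v w ∧ f w < f v}.Subsingleton)
    (hup : {w | H.Adj v w ∧ f v < f w}.Subsingleton) : (H.neighborSet v).ncard ≤ 2 := by
  have hsplit : H.neighborSet v = {w | H.Adj v w ∧ f w < f v} ∪ {w | H.Adj v w ∧ f v < f w} := by
    ext w
    simp only [mem_neighborSet, Set.mem_union, Set.mem_ofPred_eq, ← and_or_left]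
    exact ⟨fun h => ⟨h, (hadj h).symm.lt_or_gt⟩, And.left⟩
  rw [hsplit]
  calc _ ≤ _ := Set.ncard_union_le _ _
    _ ≤ 1 + 1 := add_le_add ((Set.ncard_le_one hlow.finite).mpr fun _ ha _ hb => hlow ha hb)
        ((Set.ncard_le_one hup.finite).mpr fun _ ha _ hb => hup ha hb)

theorem not_reachable_of_neighborSet_eq_empty {x y : V} (hxy : x ≠ y)
    (hy : H.neighborSet y = ∅) : ¬ H.Reachable x y := by
  rintro ⟨p⟩
  exact (Set.eq_empty_iff_forall_notMem.mp hy) _ (p.reverse.adj_snd (Walk.not_nil_of_ne hxy.symm))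

variable [DecidableEq V]

def upEdges (D : Finset V) (g : V → V) : Finset (Sym2 V) := D.image fun d => s(d, g d)

variable {D : Finset V} {g : V → V}

theorem fromEdgeSet_upEdges_adj (hf : ∀ d ∈ D, f d < f (g d)) {v w : V} :
    (fromEdgeSet (upEdges D g : Set (Sym2 V))).Adj v w ↔ v ∈ D ∧ w = g v ∨ w ∈ D ∧ v = g w := by
  simp only [fromEdgeSet_adj, upEdges, coe_image, Set.mem_image, mem_coe, Sym2.eq, Sym2.rel_iff',
    Prod.mk.injEq, Prod.swap_prod_mk]
  constructor
  · rintro ⟨⟨d, hd, ⟨rfl, rfl⟩ | ⟨rfl, rfl⟩⟩, -⟩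
    exacts [Or.inl ⟨hd, rfl⟩, Or.inr ⟨hd, rfl⟩]
  · rintro (⟨hv, rfl⟩ | ⟨hw, rfl⟩)
    · exact ⟨⟨v, hv, .inl ⟨rfl, rfl⟩⟩, fun h => (hf v hv).ne (congrArg f h)⟩
    · exact ⟨⟨w, hw, .inr ⟨rfl, rfl⟩⟩, fun h => (hf w hw).ne' (congrArg f h)⟩

theorem card_upEdges (hf : ∀ d ∈ D, f d < f (g d)) : (upEdges D g).card = D.card := by
  refine card_image_of_injOn fun d hd d' hd' h => ?_
  rcases Sym2.eq_iff.mp h with ⟨h, -⟩ | ⟨h₁, h₂⟩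
  · exact h
  · have : f d < f d' := h₂ ▸ hf d hd
    have : f d' < f d := h₁ ▸ hf d' hd'
    omega

theorem fromEdgeSet_upEdges_adj_of_lt (hf : ∀ d ∈ D, f d < f (g d)) {v w : V}
    (h : (fromEdgeSet (upEdges D g : Set (Sym2 V))).Adj v w) (hlt : f w < f v) :
    w ∈ D ∧ v = g w := by
  rcases (fromEdgeSet_upEdges_adj hf).mp h with ⟨hv, rfl⟩ | h
  exacts [absurd hlt (hf v hv).not_gt, h]

theorem apply_ne_of_adj_fromEdgeSet_upEdges (hf : ∀ d ∈ D, f d < f (g d)) ⦃v w : V⦄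
    (h : (fromEdgeSet (upEdges D g : Set (Sym2 V))).Adj v w) : f v ≠ f w := by
  rcases (fromEdgeSet_upEdges_adj hf).mp h with ⟨hv, rfl⟩ | ⟨hw, rfl⟩
  exacts [(hf v hv).ne, (hf w hw).ne']

theorem lowerNeighbors_fromEdgeSet_upEdges_subsingleton (hf : ∀ d ∈ D, f d < f (g d))
    (hg : Set.InjOn g D) (v : V) :
    {w | (fromEdgeSet (upEdges D g : Set (Sym2 V))).Adj v w ∧ f w < f v}.Subsingleton := by
  rintro w ⟨hw, hlt⟩ w' ⟨hw', hlt'⟩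
  obtain ⟨hwD, rfl⟩ := fromEdgeSet_upEdges_adj_of_lt hf hw hlt
  obtain ⟨hwD', h⟩ := fromEdgeSet_upEdges_adj_of_lt hf hw' hlt'
  exact hg hwD hwD' h

theorem upperNeighbors_fromEdgeSet_upEdges_subsingleton (hf : ∀ d ∈ D, f d < f (g d)) (v : V) :
    {w | (fromEdgeSet (upEdges D g : Set (Sym2 V))).Adj v w ∧ f v < f w}.Subsingleton := by
  rintro w ⟨hw, hlt⟩ w' ⟨hw', hlt'⟩
  rw [(fromEdgeSet_upEdges_adj_of_lt hf hw.symm hlt).2,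
    (fromEdgeSet_upEdges_adj_of_lt hf hw'.symm hlt').2]

theorem isAcyclic_fromEdgeSet_upEdges (hf : ∀ d ∈ D, f d < f (g d)) (hg : Set.InjOn g D) :
    (fromEdgeSet (upEdges D g : Set (Sym2 V))).IsAcyclic :=
  isAcyclic_of_lowerNeighbors_subsingleton (apply_ne_of_adj_fromEdgeSet_upEdges hf)
    (lowerNeighbors_fromEdgeSet_upEdges_subsingleton hf hg)

theorem ncard_neighborSet_fromEdgeSet_upEdges_le_two (hf : ∀ d ∈ D, f d < f (g d))
    (hg : Set.InjOn g D) (v : V) :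
    ((fromEdgeSet (upEdges D g : Set (Sym2 V))).neighborSet v).ncard ≤ 2 :=
  ncard_neighborSet_le_two_of_subsingleton (apply_ne_of_adj_fromEdgeSet_upEdges hf) v
    (lowerNeighbors_fromEdgeSet_upEdges_subsingleton hf hg v)
    (upperNeighbors_fromEdgeSet_upEdges_subsingleton hf v)

theorem ncard_neighborSet_fromEdgeSet_upEdges_le_one (hf : ∀ d ∈ D, f d < f (g d)) {v : V}
    (hv : ∀ d ∈ D, g d ≠ v) :
    ((fromEdgeSet (upEdges D g : Set (Sym2 V))).neighborSet v).ncard ≤ 1 := by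
  refine (Set.ncard_le_ncard fun w hw => ?_).trans (Set.ncard_singleton (g v)).le
  rcases (fromEdgeSet_upEdges_adj hf).mp hw with ⟨-, rfl⟩ | ⟨hwD, rfl⟩
  · rfl
  · exact absurd rfl (hv w hwD)

theorem neighborSet_fromEdgeSet_upEdges_eq_empty (hf : ∀ d ∈ D, f d < f (g d)) {v : V}
    (hvD : v ∉ D) (hv : ∀ d ∈ D, g d ≠ v) :
    (fromEdgeSet (upEdges D g : Set (Sym2 V))).neighborSet v = ∅ := by
  refine Set.eq_empty_of_forall_notMem fun w hw => ?_
  rcases (fromEdgeSet_upEdges_adj hf).mp hw with ⟨h, -⟩ | ⟨hwD, rfl⟩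
  exacts [hvD h, hv w hwD rfl]

end SimpleGraph

section Hamming
variable {ι β : Type*} [Fintype ι] [DecidableEq ι] [AddZeroClass β] [DecidableEq β]

theorem hammingNorm_add_single {v : ι → β} {k : ι} {x : β} (hv : v k = 0) (hx : x ≠ 0) :
    hammingNorm (v + Pi.single k x) = hammingNorm v + 1 := by
  unfold hammingNorm
  rw [← card_insert_of_notMem (a := k) (s := {i | v i ≠ 0}) (by simp [hv])]
  congr 1
  ext i
  by_cases hik : i = k
  · subst hik; simp [hv, hx]
  · simp [hik]

end Hamming

theorem Pi.single_left_injective {ι M : Type*} [DecidableEq ι] [Zero M] {x : M} (hx : x ≠ 0) :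
    Function.Injective fun i : ι => Pi.single i x := fun i j h => by
  by_contra hij
  simpa [hij, hx] using congrFun h i

local notation "𝐞" i:max => (Pi.single i (1 : ZMod 2) : Fin _ → ZMod 2)

theorem cube_adj_iff {n : ℕ} {v w : Fin n → ZMod 2} : (cube n).Adj v w ↔ ∃ k, w = v + 𝐞 k := by
  have key : ∀ p q : ZMod 2, p ≠ q ↔ q = p + 1 := by decide
  change hammingDist v w = 1 ↔ _
  rw [hammingDist, card_eq_one]
  refine exists_congr fun k => ⟨fun h => funext fun i => ?_, fun h => ?_⟩
  · have hi := congrArg (i ∈ ·) h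
    by_cases hik : i = k
    · subst hik; simpa [key] using hi
    · simpa [hik, not_not, eq_comm] using hi
  · ext i
    by_cases hik : i = k
    · subst hik; simp [h, key]
    · simp [h, hik]

namespace CahaKoubek
variable {n : ℕ} (a b c : Fin n)

def base : Finset (Fin n → ZMod 2) :=
  insert 0 ((({a, c} : Finset (Fin n))ᶜ.image fun i => 𝐞 i) ∪
    ({a, c} : Finset (Fin n))ᶜ.image fun i => 𝐞 a + 𝐞 i)

def up (v : Fin n → ZMod 2) : Fin n → ZMod 2 :=
  v + 𝐞 (if v = 0 then b else if v a = 0 then a else c)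

variable {a b c}

theorem mem_base {v : Fin n → ZMod 2} :
    v ∈ base a c ↔ v = 0 ∨ ∃ i, i ≠ a ∧ i ≠ c ∧ (v = 𝐞 i ∨ v = 𝐞 a + 𝐞 i) := by
  simp only [base, mem_insert, mem_union, mem_image, mem_compl, mem_insert, mem_singleton]
  grind

theorem card_base (hac : a ≠ c) : (base a c).card = 2 * n - 3 := by
  have hcompl : ({a, c} : Finset (Fin n))ᶜ.card = n - 2 := by
    rw [card_compl, card_pair hac, Fintype.card_fin]
  rw [base, card_insert_of_notMem, card_union_of_disjoint, card_image_of_injective,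
    card_image_of_injective, hcompl]
  · have := card_pair hac ▸ card_le_univ ({a, c} : Finset (Fin n))
    rw [Fintype.card_fin] at this
    omega
  · exact add_right_injective _ |>.comp (Pi.single_left_injective one_ne_zero)
  · exact Pi.single_left_injective one_ne_zero
  · simp only [Finset.disjoint_left, mem_image, mem_compl, mem_insert, mem_singleton, not_or]
    rintro _ ⟨i, ⟨hia, -⟩, rfl⟩ ⟨j, ⟨hja, -⟩, h⟩
    simpa [hia, hja] using congrFun h a
  · rw [mem_union, mem_image, mem_image]
    rintro (⟨i, -, h⟩ | ⟨i, hi, h⟩)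
    · simpa using congrFun h i
    · obtain ⟨hia, -⟩ : i ≠ a ∧ i ≠ c := by simpa using hi
      simpa [hia] using congrFun h a

theorem up_zero : up a b c 0 = 𝐞 b := by simp [up]

theorem up_single {i : Fin n} (hia : i ≠ a) : up a b c (𝐞 i) = 𝐞 i + 𝐞 a := by
  simp [up, hia.symm]

theorem up_single_add_single {i : Fin n} (hia : i ≠ a) :
    up a b c (𝐞 a + 𝐞 i) = 𝐞 a + 𝐞 i + 𝐞 c := by
  have ha : (𝐞 a + 𝐞 i) a = 1 := by simp [hia]
  have hne : 𝐞 a + 𝐞 i ≠ 0 := fun h => zero_ne_one (by rwa [h] at ha)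
  rw [up, if_neg hne, ha, if_neg one_ne_zero]

theorem up_injOn (hab : a ≠ b) (hac : a ≠ c) : Set.InjOn (up a b c) (base a c) := by
  intro d hd d' hd' h
  -- images of elements of `base a c` of different kinds differ at `a` or at `c`
  rcases mem_base.mp hd with rfl | ⟨i, hia, hic, rfl | rfl⟩ <;>
  rcases mem_base.mp hd' with rfl | ⟨j, hja, hjc, rfl | rfl⟩ <;>
  simp (disch := assumption) only [up_zero, up_single, up_single_add_single] at h <;>
  first
  | rfl
  | simpa using h
  | have ha := congrFun h a
    have hc := congrFun h c
    simp only [Pi.add_apply, Pi.single_apply] at ha hc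
    grind

theorem cube_adj_up (v : Fin n → ZMod 2) : (cube n).Adj v (up a b c v) :=
  cube_adj_iff.mpr ⟨_, rfl⟩

theorem hammingNorm_lt_up (hac : a ≠ c) {d : Fin n → ZMod 2} (hd : d ∈ base a c) :
    hammingNorm d < hammingNorm (up a b c d) := by
  rcases mem_base.mp hd with rfl | ⟨i, hia, hic, rfl | rfl⟩
  · simp [up_zero]
  · rw [up_single hia, hammingNorm_add_single (by simp [hia]) one_ne_zero]
    omega
  · rw [up_single_add_single hia,
      hammingNorm_add_single (v := 𝐞 a + 𝐞 i) (k := c) (by simp [hac, hic]) one_ne_zero]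
    omega

theorem up_ne_zero (hac : a ≠ c) {d : Fin n → ZMod 2} (hd : d ∈ base a c) : up a b c d ≠ 0 :=
  hammingNorm_pos_iff.mp ((Nat.zero_le _).trans_lt (hammingNorm_lt_up hac hd))

theorem single_notMem_base (hac : a ≠ c) : 𝐞 c ∉ base a c := by
  rw [mem_base]
  rintro (h | ⟨i, hia, hic, h | h⟩)
  · simpa using congrFun h c
  · simpa [hic] using congrFun h c
  · simpa [hac, hic] using congrFun h c

theorem up_ne_single (hac : a ≠ c) (hbc : b ≠ c) {d : Fin n → ZMod 2}
    (hd : d ∈ base a c) : up a b c d ≠ 𝐞 c := by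
  rcases mem_base.mp hd with rfl | ⟨i, hia, hic, rfl | rfl⟩
  · rw [up_zero]
    exact (Pi.single_left_injective one_ne_zero).ne hbc
  · rw [up_single hia]
    intro h
    simpa [hia, hac] using congrFun h a
  · rw [up_single_add_single hia]
    intro h
    simpa [hia, hac] using congrFun h a

theorem toSubgraph_neighborSet_single_subset (hab : a ≠ b) (hac : a ≠ c) {y : Fin n → ZMod 2}
    {w : (cube n).Walk 0 y} (hw : w.IsPath)
    (hP : ∀ e ∈ upEdges (base a c) (up a b c), e ∈ w.edges) :
    w.toSubgraph.neighborSet (𝐞 a) ⊆ {𝐞 a + 𝐞 c} := by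
  have hf (d) (hd : d ∈ base a c) := hammingNorm_lt_up (b := b) hac hd
  have forced {v v'} (h : (fromEdgeSet (upEdges (base a c) (up a b c) : Set _)).Adj v v') :
      w.toSubgraph.Adj v v' :=
    w.adj_toSubgraph_iff_mem_edges.mpr (hP _ ((fromEdgeSet_adj _).mp h).1)
  intro d hd
  obtain ⟨k, rfl⟩ := cube_adj_iff.mp (w.toSubgraph.adj_sub hd)
  by_cases hka : k = a
  -- `d = x`, and the path leaves `x` along the edge `x — 𝐞 b` of `P`
  · have h0 : 𝐞 a + 𝐞 k = 0 := by
      rw [hka, ← Pi.single_add, show (1 + 1 : ZMod 2) = 0 from rfl, Pi.single_zero]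
    rw [h0] at hd
    have h1 := hw.snd_of_toSubgraph_adj hd.symm
    have h2 := hw.snd_of_toSubgraph_adj
      (forced ((fromEdgeSet_upEdges_adj hf).mpr (.inl ⟨mem_base.mpr (.inl rfl), rfl⟩)))
    rw [up_zero] at h2
    exact absurd (Pi.single_left_injective one_ne_zero (h1.symm.trans h2)) hab
  by_cases hkc : k = c
  · rw [hkc]; rfl
  -- `d = 𝐞 a + 𝐞 k` already has its two path edges in `P`, to `𝐞 k` and to `d + 𝐞 c`
  have hd' : 𝐞 a + 𝐞 k ∈ base a c := mem_base.mpr (.inr ⟨k, hka, hkc, .inr rfl⟩)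
  have hk : 𝐞 k ∈ base a c := mem_base.mpr (.inr ⟨k, hka, hkc, .inl rfl⟩)
  have h1 := forced ((fromEdgeSet_upEdges_adj hf).mpr (.inl ⟨hd', rfl⟩))
  have h2 := forced ((fromEdgeSet_upEdges_adj hf).mpr
    (.inr ⟨hk, by rw [up_single hka, add_comm]⟩))
  rw [up_single_add_single hka] at h1
  have hne : 𝐞 a + 𝐞 k + 𝐞 c ≠ 𝐞 k := fun h => by simpa [hac, hkc] using congrFun h c
  rcases hw.eq_or_eq_of_toSubgraph_adj hne h1 h2 hd.symm with h | h
  · simpa [hac, hkc] using congrFun h c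
  · exact absurd (Pi.single_left_injective one_ne_zero h).symm hka

theorem not_exists_isHamiltonian (hab : a ≠ b) (hac : a ≠ c) :
    ¬ ∃ w : (cube n).Walk 0 (𝐞 c), w.IsHamiltonian ∧
      ∀ e ∈ upEdges (base a c) (up a b c), e ∈ w.edges := by
  rintro ⟨w, hw, hP⟩
  have h2 := hw.isPath.ncard_neighborSet_toSubgraph_eq_two (hw.mem_support (𝐞 a))
    (by simp) ((Pi.single_left_injective one_ne_zero).ne hac)
  have h1 := Set.ncard_le_ncard (toSubgraph_neighborSet_single_subset hab hac hw.isPath hP)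
  rw [Set.ncard_singleton] at h1
  omega

end CahaKoubek

open CahaKoubek in
theorem stmt16 (n : ℕ) (hn : 3 ≤ n) :
    ∃ (x y : Fin n → ZMod 2) (P : Finset (Sym2 (Fin n → ZMod 2))),
      parity x ≠ parity y ∧
      ↑P ⊆ (cube n).edgeSet ∧
      P.card = 2 * n - 3 ∧
      (SimpleGraph.fromEdgeSet ((↑P : Set (Sym2 (Fin n → ZMod 2))))).IsAcyclic ∧
      (∀ v, ((SimpleGraph.fromEdgeSet (↑P : Set (Sym2 (Fin n → ZMod 2)))).neighborSet v).ncard ≤ 2) ∧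
      ((SimpleGraph.fromEdgeSet ((↑P : Set (Sym2 (Fin n → ZMod 2))))).neighborSet x).ncard ≤ 1 ∧
      ((SimpleGraph.fromEdgeSet ((↑P : Set (Sym2 (Fin n → ZMod 2))))).neighborSet y).ncard ≤ 1 ∧
      ¬ (SimpleGraph.fromEdgeSet (↑P : Set (Sym2 (Fin n → ZMod 2)))).Reachable x y ∧
      ¬ ∃ w : (cube n).Walk x y, w.IsHamiltonian ∧ ∀ e ∈ P, e ∈ w.edges := by
  let a : Fin n := ⟨0, by omega⟩
  let b : Fin n := ⟨1, by omega⟩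
  let c : Fin n := ⟨n - 1, by omega⟩
  have hab : a ≠ b := by simp [a, b, Fin.ext_iff]
  have hac : a ≠ c := by simp [a, c, Fin.ext_iff]; omega
  have hbc : b ≠ c := by simp [b, c, Fin.ext_iff]; omega
  have hf (d) (hd : d ∈ base a c) := hammingNorm_lt_up (b := b) hac hd
  have hy := neighborSet_fromEdgeSet_upEdges_eq_empty hf (single_notMem_base hac)
    fun d hd => up_ne_single hac hbc hd
  have hinj := up_injOn hab hac
  refine ⟨0, 𝐞 c, upEdges (base a c) (up a b c), by simp [parity], ?_, ?_,
    isAcyclic_fromEdgeSet_upEdges hf hinj, ncard_neighborSet_fromEdgeSet_upEdges_le_two hf hinj,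
    ncard_neighborSet_fromEdgeSet_upEdges_le_one hf fun d hd => up_ne_zero hac hd, by simp [hy],
    not_reachable_of_neighborSet_eq_empty (Pi.single_ne_zero_iff.mpr one_ne_zero).symm hy,
    not_exists_isHamiltonian hab hac⟩
  · intro e he
    obtain ⟨d, -, rfl⟩ := mem_image.mp he
    exact cube_adj_up d
  · rw [card_upEdges hf, card_base hac]
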